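/- arXiv:2502.10654 — 5 statements merged into one kernel-verified Lean document; each statement's English description precedes it below -/
import Mathlib

section
/- The convolution of two log-concave sequences of nonnegative reals with no internal zeros is log-concave. -/
open Finset

/-- Ratio-monotonicity for a ℤ-indexed nonnegative log-concave sequence with
no internal zeros. -/
private lemma key_ratio (x : ℤ → ℝ) (hx0 : ∀ i, 0 ≤ x i)
    (hlc : ∀ t : ℤ, x (t - 1) * x (t + 1) ≤ x t ^ 2)
    (hint : ∀ i j k : ℤ, i ≤ j → j ≤ k → x i ≠ 0 → x k ≠ 0 → x j ≠ 0) :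
    ∀ i j : ℤ, i ≤ j → x i * x (j + 1) ≤ x (i + 1) * x j := by
  have main : ∀ nn : ℕ, ∀ i : ℤ, x i ≠ 0 → x (i + nn + 1) ≠ 0 →
      x i * x (i + nn + 1) ≤ x (i + 1) * x (i + nn) := by
    intro nn
    induction nn with
    | zero => intro i _ _; simp [mul_comm]
    | succ nn ih =>
      intro i hi htop
      have e1 : i + ((nn : ℤ) + 1) + 1 = i + nn + 1 + 1 := by ring
      have e2 : i + ((nn : ℤ) + 1) = i + nn + 1 := by ring
      push_cast at htop ⊢
      rw [e1] at htop
      rw [e1, e2]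
      have hmid : x (i + nn + 1) ≠ 0 := by
        refine hint i (i + nn + 1) (i + nn + 1 + 1) ?_ (by linarith) hi htop
        have : (0 : ℤ) ≤ (nn : ℤ) := Int.ofNat_nonneg nn
        linarith
      have hb1 : 0 < x (i + nn + 1) := (hx0 _).lt_of_ne' hmid
      have ihh := ih i hi hmid
      have hlcn := hlc (i + nn + 1)
      have e3 : i + nn + 1 - 1 = i + nn := by ring
      rw [e3] at hlcn
      have ha1 : 0 ≤ x (i + 1) := hx0 _
      have hb2 : 0 ≤ x (i + nn + 1 + 1) := hx0 _
      refine le_of_mul_le_mul_right ?_ hb1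
      nlinarith [mul_le_mul_of_nonneg_right ihh hb2,
        mul_le_mul_of_nonneg_left hlcn ha1]
  intro i j hij
  by_cases hi : x i = 0
  · rw [hi, zero_mul]; exact mul_nonneg (hx0 _) (hx0 _)
  by_cases hj : x (j + 1) = 0
  · rw [hj, mul_zero]; exact mul_nonneg (hx0 _) (hx0 _)
  have hn : i + ((j - i).toNat : ℤ) = j := by omega
  have h' : x (i + ((j - i).toNat : ℤ) + 1) ≠ 0 := by rw [hn]; exact hj
  have := main (j - i).toNat i hi h'
  rwa [hn] at this

/-- The core quadratic inequality for convolutions, for an arbitrary finite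
index set, via the pairing (Cauchy–Binet style) argument. -/
private lemma conv_core (A B : ℤ → ℝ)
    (kA : ∀ i j : ℤ, i ≤ j → A i * A (j + 1) ≤ A (i + 1) * A j)
    (kB : ∀ i j : ℤ, i ≤ j → B i * B (j + 1) ≤ B (i + 1) * B j)
    (k : ℤ) (T : Finset ℤ) :
    (∑ p ∈ T, A (p - 1) * B (k - p)) * (∑ q ∈ T, A q * B (k + 1 - q)) ≤
      (∑ p ∈ T, A p * B (k - p)) * (∑ q ∈ T, A (q - 1) * B (k + 1 - q)) := by
  set g : ℤ → ℤ → ℝ := fun p q =>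
    (A p * A (q - 1) - A (p - 1) * A q) * (B (k - p) * B (k + 1 - q)) with hg
  have hpair : ∀ p q : ℤ, p ≤ q → 0 ≤ g p q + g q p := by
    intro p q hpq
    have hD : 0 ≤ A p * A (q - 1) - A (p - 1) * A q := by
      have h := kA (p - 1) (q - 1) (by omega)
      have e1 : p - 1 + 1 = p := by ring
      have e2 : q - 1 + 1 = q := by ring
      rw [e1, e2] at h
      linarith
    have hE : 0 ≤ B (k - p) * B (k + 1 - q) - B (k - q) * B (k + 1 - p) := by
      have h := kB (k - q) (k - p) (by omega)
      have e1 : k - p + 1 = k + 1 - p := by ring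
      have e2 : k - q + 1 = k + 1 - q := by ring
      rw [e1, e2] at h
      nlinarith [h]
    have he : g p q + g q p =
        (A p * A (q - 1) - A (p - 1) * A q) *
          (B (k - p) * B (k + 1 - q) - B (k - q) * B (k + 1 - p)) := by
      simp only [hg]; ring
    rw [he]
    exact mul_nonneg hD hE
  have hpair' : ∀ p q : ℤ, 0 ≤ g p q + g q p := by
    intro p q
    rcases le_total p q with h | h
    · exact hpair p q h
    · rw [add_comm]; exact hpair q p h
  have h2 : 0 ≤ ∑ p ∈ T, ∑ q ∈ T, (g p q + g q p) :=
    Finset.sum_nonneg fun p _ => Finset.sum_nonneg fun q _ => hpair' p q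
  have hsw : (∑ p ∈ T, ∑ q ∈ T, g q p) = ∑ p ∈ T, ∑ q ∈ T, g p q :=
    Finset.sum_comm
  have hsplit : (∑ p ∈ T, ∑ q ∈ T, (g p q + g q p)) =
      (∑ p ∈ T, ∑ q ∈ T, g p q) + (∑ p ∈ T, ∑ q ∈ T, g q p) := by
    simp [Finset.sum_add_distrib]
  have hgsum : 0 ≤ ∑ p ∈ T, ∑ q ∈ T, g p q := by
    rw [hsplit, hsw] at h2; linarith
  have expand : (∑ p ∈ T, A p * B (k - p)) * (∑ q ∈ T, A (q - 1) * B (k + 1 - q)) -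
      (∑ p ∈ T, A (p - 1) * B (k - p)) * (∑ q ∈ T, A q * B (k + 1 - q)) =
      ∑ p ∈ T, ∑ q ∈ T, g p q := by
    rw [Finset.sum_mul_sum, Finset.sum_mul_sum, ← Finset.sum_sub_distrib]
    refine Finset.sum_congr rfl fun p _ => ?_
    rw [← Finset.sum_sub_distrib]
    refine Finset.sum_congr rfl fun q _ => ?_
    simp only [hg]; ring
  linarith

/-- The convolution of two nonnegative log-concave sequences with no internal
zeros is log-concave. -/
theorem stmt_1 (m n : ℕ) (a b c : ℕ → ℝ)
    (ha0 : ∀ i, 0 ≤ a i) (hb0 : ∀ j, 0 ≤ b j)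
    (haz : ∀ i, m < i → a i = 0) (hbz : ∀ j, n < j → b j = 0)
    (halc : ∀ k, 1 ≤ k → k ≤ m - 1 → a (k - 1) * a (k + 1) ≤ a k ^ 2)
    (hblc : ∀ k, 1 ≤ k → k ≤ n - 1 → b (k - 1) * b (k + 1) ≤ b k ^ 2)
    (haint : ∀ i j k, i ≤ j → j ≤ k → k ≤ m → a i ≠ 0 → a k ≠ 0 → a j ≠ 0)
    (hbint : ∀ i j k, i ≤ j → j ≤ k → k ≤ n → b i ≠ 0 → b k ≠ 0 → b j ≠ 0)
    (hc : ∀ k, c k = ∑ i ∈ Finset.range (k + 1), a i * b (k - i)) :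
    ∀ k, 1 ≤ k → k ≤ m + n - 1 → c (k - 1) * c (k + 1) ≤ c k ^ 2 := by
  classical
  set A : ℤ → ℝ := fun i => if 0 ≤ i then a i.toNat else 0 with hA
  set B : ℤ → ℝ := fun i => if 0 ≤ i then b i.toNat else 0 with hB
  have hA0 : ∀ i, 0 ≤ A i := by
    intro i; simp only [hA]; split
    · exact ha0 _
    · exact le_refl 0
  have hB0 : ∀ i, 0 ≤ B i := by
    intro i; simp only [hB]; split
    · exact hb0 _
    · exact le_refl 0
  have hAlc : ∀ t : ℤ, A (t - 1) * A (t + 1) ≤ A t ^ 2 := by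
    intro t
    by_cases h1 : t ≤ 0
    · have hz : A (t - 1) = 0 := by simp only [hA]; rw [if_neg (by omega)]
      rw [hz, zero_mul]; exact sq_nonneg _
    by_cases h2 : (m : ℤ) ≤ t
    · have hz : A (t + 1) = 0 := by
        simp only [hA]; rw [if_pos (by omega)]; exact haz _ (by omega)
      rw [hz, mul_zero]; exact sq_nonneg _
    · have e0 : A t = a t.toNat := by simp only [hA]; rw [if_pos (by omega)]
      have e1 : A (t - 1) = a (t.toNat - 1) := by
        simp only [hA]; rw [if_pos (by omega)]; congr 1; omega
      have e2 : A (t + 1) = a (t.toNat + 1) := by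
        simp only [hA]; rw [if_pos (by omega)]; congr 1; omega
      rw [e0, e1, e2]
      exact halc t.toNat (by omega) (by omega)
  have hBlc : ∀ t : ℤ, B (t - 1) * B (t + 1) ≤ B t ^ 2 := by
    intro t
    by_cases h1 : t ≤ 0
    · have hz : B (t - 1) = 0 := by simp only [hB]; rw [if_neg (by omega)]
      rw [hz, zero_mul]; exact sq_nonneg _
    by_cases h2 : (n : ℤ) ≤ t
    · have hz : B (t + 1) = 0 := by
        simp only [hB]; rw [if_pos (by omega)]; exact hbz _ (by omega)
      rw [hz, mul_zero]; exact sq_nonneg _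
    · have e0 : B t = b t.toNat := by simp only [hB]; rw [if_pos (by omega)]
      have e1 : B (t - 1) = b (t.toNat - 1) := by
        simp only [hB]; rw [if_pos (by omega)]; congr 1; omega
      have e2 : B (t + 1) = b (t.toNat + 1) := by
        simp only [hB]; rw [if_pos (by omega)]; congr 1; omega
      rw [e0, e1, e2]
      exact hblc t.toNat (by omega) (by omega)
  have hAub : ∀ i : ℤ, A i ≠ 0 → 0 ≤ i ∧ i ≤ (m : ℤ) := by
    intro i hi
    constructor
    · by_contra h; exact hi (by simp only [hA]; rw [if_neg h])
    · by_contra h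
      exact hi (by simp only [hA]; rw [if_pos (by omega)]; exact haz _ (by omega))
  have hBub : ∀ i : ℤ, B i ≠ 0 → 0 ≤ i ∧ i ≤ (n : ℤ) := by
    intro i hi
    constructor
    · by_contra h; exact hi (by simp only [hB]; rw [if_neg h])
    · by_contra h
      exact hi (by simp only [hB]; rw [if_pos (by omega)]; exact hbz _ (by omega))
  have hAint : ∀ i j l : ℤ, i ≤ j → j ≤ l → A i ≠ 0 → A l ≠ 0 → A j ≠ 0 := by
    intro i j l hij hjl hi hl
    obtain ⟨hi0, him⟩ := hAub i hi
    obtain ⟨hl0, hlm⟩ := hAub l hl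
    have ei : A i = a i.toNat := by simp only [hA]; rw [if_pos hi0]
    have el : A l = a l.toNat := by simp only [hA]; rw [if_pos hl0]
    have ej : A j = a j.toNat := by simp only [hA]; rw [if_pos (by omega)]
    rw [ej]
    exact haint i.toNat j.toNat l.toNat (by omega) (by omega) (by omega)
      (by rw [← ei]; exact hi) (by rw [← el]; exact hl)
  have hBint : ∀ i j l : ℤ, i ≤ j → j ≤ l → B i ≠ 0 → B l ≠ 0 → B j ≠ 0 := by
    intro i j l hij hjl hi hl
    obtain ⟨hi0, him⟩ := hBub i hi
    obtain ⟨hl0, hlm⟩ := hBub l hl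
    have ei : B i = b i.toNat := by simp only [hB]; rw [if_pos hi0]
    have el : B l = b l.toNat := by simp only [hB]; rw [if_pos hl0]
    have ej : B j = b j.toNat := by simp only [hB]; rw [if_pos (by omega)]
    rw [ej]
    exact hbint i.toNat j.toNat l.toNat (by omega) (by omega) (by omega)
      (by rw [← ei]; exact hi) (by rw [← el]; exact hl)
  have kA := key_ratio A hA0 hAlc hAint
  have kB := key_ratio B hB0 hBlc hBint
  have hsum : ∀ (t : ℕ) (lo hi : ℤ), lo ≤ 0 → (t : ℤ) ≤ hi →
      ∑ p ∈ Finset.Icc lo hi, A p * B ((t : ℤ) - p) = c t := by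
    intro t lo hi hlo hhi
    have hsub : Finset.Icc (0 : ℤ) (t : ℤ) ⊆ Finset.Icc lo hi :=
      Finset.Icc_subset_Icc hlo hhi
    rw [← Finset.sum_subset hsub ?_]
    · rw [hc t]
      refine Finset.sum_nbij' (fun p => p.toNat) (fun i => (i : ℤ)) ?_ ?_ ?_ ?_ ?_
      · intro p hp
        rw [Finset.mem_Icc] at hp
        rw [Finset.mem_range]
        omega
      · intro i hi
        rw [Finset.mem_range] at hi
        rw [Finset.mem_Icc]
        omega
      · intro p hp
        rw [Finset.mem_Icc] at hp
        omega
      · intro i _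
        omega
      · intro p hp
        rw [Finset.mem_Icc] at hp
        have eA : A p = a p.toNat := by simp only [hA]; rw [if_pos hp.1]
        have eB : B ((t : ℤ) - p) = b (t - p.toNat) := by
          simp only [hB]; rw [if_pos (by omega)]; congr 1; omega
        rw [eA, eB]
    · intro p hp hnp
      rw [Finset.mem_Icc] at hp
      have hcase : p < 0 ∨ (t : ℤ) < p := by
        by_contra h
        push_neg at h
        exact hnp (Finset.mem_Icc.mpr ⟨h.1, h.2⟩)
      rcases hcase with h | h
      · have hz : A p = 0 := by simp only [hA]; rw [if_neg (by omega)]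
        rw [hz, zero_mul]
      · have hz : B ((t : ℤ) - p) = 0 := by simp only [hB]; rw [if_neg (by omega)]
        rw [hz, mul_zero]
  intro k hk1 _
  set T : Finset ℤ := Finset.Icc (-1 : ℤ) ((k : ℤ) + 2) with hT
  have hmap : ∀ t : ℕ,
      (∑ q ∈ T, A (q - 1) * B ((t : ℤ) + 1 - q)) =
        ∑ p ∈ Finset.Icc (-2 : ℤ) ((k : ℤ) + 1), A p * B ((t : ℤ) - p) := by
    intro t
    have hTm : T = Finset.map (addRightEmbedding (1 : ℤ))
        (Finset.Icc (-2 : ℤ) ((k : ℤ) + 1)) := by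
      rw [Finset.map_add_right_Icc]
      rw [hT]
      congr 1
    rw [hTm, Finset.sum_map]
    refine Finset.sum_congr rfl fun p _ => ?_
    simp only [addRightEmbedding_apply]
    congr 1
    · congr 1; ring
    · congr 1; ring
  have h1 : (∑ p ∈ T, A p * B ((k : ℤ) - p)) = c k :=
    hsum k (-1) ((k : ℤ) + 2) (by omega) (by omega)
  have h2 : (∑ q ∈ T, A q * B ((k : ℤ) + 1 - q)) = c (k + 1) := by
    rw [← hsum (k + 1) (-1) ((k : ℤ) + 2) (by omega) (by omega)]
    refine Finset.sum_congr rfl fun q _ => ?_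
    congr 2
  have h3 : (∑ q ∈ T, A (q - 1) * B ((k : ℤ) + 1 - q)) = c k := by
    rw [hmap k]
    exact hsum k (-2) ((k : ℤ) + 1) (by omega) (by omega)
  have h4 : (∑ p ∈ T, A (p - 1) * B ((k : ℤ) - p)) = c (k - 1) := by
    have e : ((k - 1 : ℕ) : ℤ) + 1 = (k : ℤ) := by omega
    rw [← hsum (k - 1) (-2) ((k : ℤ) + 1) (by omega) (by omega), ← hmap (k - 1)]
    refine Finset.sum_congr rfl fun q _ => ?_
    congr 2
    omega
  have hmain := conv_core A B kA kB (k : ℤ) T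
  rw [h1, h2, h3, h4] at hmain
  rw [pow_two]
  exact hmain
end

section
/- For integers 1 ≤ k ≤ t: (2^k/(k+1))·C(t,k)·C(t+1,k) ≥ 2·C(t,k-2)·C(t,k+1). -/
-- log-concavity cross inequality
lemma aux1 (t m : ℕ) (hk : m + 2 ≤ t) :
    t.choose m * t.choose (m + 3) ≤ t.choose (m + 2) * (t + 1).choose (m + 2) := by
  have h1 : t.choose (m+1) * (m+1) = t.choose m * (t - m) := Nat.choose_succ_right_eq t m
  have h2 : t.choose (m+3) * (m+3) = t.choose (m+2) * (t - (m+2)) :=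
    Nat.choose_succ_right_eq t (m+2)
  have step1 : t.choose m * t.choose (m + 3) ≤ t.choose (m+1) * t.choose (m+2) := by
    have hpos : 0 < (t - m) * (m + 3) := by
      have : 2 ≤ t - m := by omega
      positivity
    refine Nat.le_of_mul_le_mul_right ?_ hpos
    have lhs : t.choose m * t.choose (m + 3) * ((t - m) * (m + 3))
        = (t.choose (m+1) * (m+1)) * (t.choose (m+2) * (t - (m+2))) := by
      calc t.choose m * t.choose (m + 3) * ((t - m) * (m + 3))
          = (t.choose m * (t - m)) * (t.choose (m+3) * (m+3)) := by ring
        _ = (t.choose (m+1) * (m+1)) * (t.choose (m+2) * (t - (m+2))) := by rw [← h1, h2]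
    have rhs : t.choose (m+1) * t.choose (m+2) * ((t - m) * (m + 3))
        = (t.choose (m+1) * (m+3)) * (t.choose (m+2) * (t - m)) := by ring
    rw [lhs, rhs]
    exact Nat.mul_le_mul (Nat.mul_le_mul_left _ (by omega))
      (Nat.mul_le_mul_left _ (by omega))
  calc t.choose m * t.choose (m + 3) ≤ t.choose (m+1) * t.choose (m+2) := step1
    _ ≤ (t+1).choose (m+2) * t.choose (m+2) := by
        apply Nat.mul_le_mul_right
        rw [Nat.choose_succ_succ]
        omega
    _ = t.choose (m+2) * (t+1).choose (m+2) := Nat.mul_comm _ _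

lemma natkey (t k : ℕ) (hk2 : 2 ≤ k) (hkt : k ≤ t) :
    2 * (t.choose (k-2) * t.choose (k+1)) * (k+1) ≤ 2^k * (t.choose k * (t+1).choose k) := by
  obtain ⟨m, rfl⟩ : ∃ m, k = m + 2 := ⟨k - 2, by omega⟩
  have hm2 : m + 2 - 2 = m := by omega
  rw [hm2]
  rcases Nat.eq_zero_or_pos m with hm | hm
  · subst hm
    -- k = 2 : 6 * C(t,0) * C(t,3) ≤ 4 * C(t,2) * C(t+1,2)
    simp only [Nat.choose_zero_right, one_mul]
    have h3 : t.choose 3 * 3 = t.choose 2 * (t - 2) := Nat.choose_succ_right_eq t 2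
    have h2 : (t+1).choose 2 * 2 = (t+1).choose 1 * (t + 1 - 1) := Nat.choose_succ_right_eq (t+1) 1
    simp [Nat.choose_one_right] at h2
    -- goal: 2 * (C(t,3)) * 3 ≤ 4 * (C(t,2) * C(t+1,2))
    calc 2 * t.choose 3 * (2 + 1) = 2 * (t.choose 3 * 3) := by ring
      _ = 2 * (t.choose 2 * (t - 2)) := by rw [h3]
      _ ≤ 2 * (t.choose 2 * ((t+1) * t)) := by
          apply Nat.mul_le_mul_left
          apply Nat.mul_le_mul_left
          calc t - 2 ≤ t := by omega
            _ ≤ (t+1) * t := Nat.le_mul_of_pos_left t (by omega)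
      _ = 2 * (t.choose 2 * ((t+1).choose 2 * 2)) := by rw [h2]
      _ = 2 ^ (0+2) * (t.choose 2 * (t+1).choose 2) := by ring
  · -- k ≥ 3
    have hpow : 2 * (m + 2 + 1) ≤ 2 ^ (m + 2) := by
      have h : m < 2 ^ m := Nat.lt_two_pow_self
      have : 2 ^ (m+2) = 4 * 2 ^ m := by ring
      omega
    calc 2 * (t.choose m * t.choose (m+3)) * (m+2+1)
        = (2 * (m+2+1)) * (t.choose m * t.choose (m+3)) := by ring
      _ ≤ 2 ^ (m+2) * (t.choose m * t.choose (m+3)) := Nat.mul_le_mul_right _ hpow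
      _ ≤ 2 ^ (m+2) * (t.choose (m+2) * (t+1).choose (m+2)) :=
          Nat.mul_le_mul_left _ (aux1 t m (by omega))

/-- For `1 ≤ k ≤ t`: `(2^k/(k+1))·C(t,k)·C(t+1,k) ≥ 2·C(t,k-2)·C(t,k+1)`
(with the convention `C(t,-1) = 0`). -/
theorem stmt_9 (t k : ℕ) (h1 : 1 ≤ k) (h2 : k ≤ t) :
    ((2 : ℚ) ^ k / ((k : ℚ) + 1)) * (t.choose k : ℚ) * ((t + 1).choose k : ℚ) ≥
      2 * (if 2 ≤ k then (t.choose (k - 2) : ℚ) else 0) * (t.choose (k + 1) : ℚ) := by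
  have hk1 : (0:ℚ) < (k : ℚ) + 1 := by positivity
  rw [ge_iff_le, div_mul_eq_mul_div, div_mul_eq_mul_div, le_div_iff₀ hk1]
  by_cases hk : 2 ≤ k
  · rw [if_pos hk]
    have key := natkey t k hk h2
    have key' : ((2 * (t.choose (k-2) * t.choose (k+1)) * (k+1) : ℕ) : ℚ)
        ≤ ((2^k * (t.choose k * (t+1).choose k) : ℕ) : ℚ) := by exact_mod_cast key
    push_cast at key'
    linarith
  · rw [if_neg hk]
    have : (0:ℚ) ≤ (2:ℚ) ^ k * (t.choose k : ℚ) * ((t+1).choose k : ℚ) := by positivity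
    nlinarith [hk1]
end

section
/- In the tree T_{m,t,1} with m ≥ 3, the number of independent sets of size mt+3 is at least C(m,3)·2^{mt-3t}. -/
open Classical Finset

/-- Vertex set of the tree `T_{m,t,1}`: the root is `none`, the child `w_i` of the
root is `some (Sum.inl i)`, the vertex `x_i^j` is `some (Sum.inr (i, j, 0))` and
its child `y_i^j` is `some (Sum.inr (i, j, 1))`. -/
abbrev TV (m t : ℕ) := Option (Fin m ⊕ Fin m × Fin t × Fin 2)

/-- The tree `T_{m,t,1}`: the root has `m` children `w_i`, each `w_i` has `t`
children `x_i^j`, and each `x_i^j` has one child `y_i^j`. -/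
def treeT (m t : ℕ) : SimpleGraph (TV m t) :=
  SimpleGraph.fromRel (fun a b =>
    (a = none ∧ ∃ i, b = some (Sum.inl i)) ∨
    (∃ i j, a = some (Sum.inl i) ∧ b = some (Sum.inr (i, j, 0))) ∨
    (∃ i j, a = some (Sum.inr (i, j, 0)) ∧ b = some (Sum.inr (i, j, 1))))

/-- The number of independent sets of size `k` in `G`. -/
noncomputable def indepCount {V : Type*} [Fintype V] (G : SimpleGraph V) (k : ℕ) : ℕ :=
  (Finset.univ.filter (fun s : Finset V =>
    s.card = k ∧ ∀ u ∈ s, ∀ w ∈ s, ¬ G.Adj u w)).card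

namespace Stmt14

variable {m t : ℕ}

noncomputable def Φ (p : Finset (Fin m) × ((Fin m × Fin t) → Fin 2)) : Finset (TV m t) :=
  p.1.image (fun i => some (Sum.inl i)) ∪
  Finset.univ.image (fun q : Fin m × Fin t => some (Sum.inr (q.1, q.2, p.2 q)))

lemma mem_Φ {p : Finset (Fin m) × ((Fin m × Fin t) → Fin 2)} {v : TV m t} :
    v ∈ Φ p ↔ (∃ i ∈ p.1, v = some (Sum.inl i)) ∨
      ∃ q : Fin m × Fin t, v = some (Sum.inr (q.1, q.2, p.2 q)) := by
  simp only [Φ, mem_union, mem_image, mem_univ, true_and]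
  constructor
  · rintro (⟨i, hi, rfl⟩ | ⟨q, rfl⟩)
    · exact Or.inl ⟨i, hi, rfl⟩
    · exact Or.inr ⟨q, rfl⟩
  · rintro (⟨i, hi, rfl⟩ | ⟨q, rfl⟩)
    · exact Or.inl ⟨i, hi, rfl⟩
    · exact Or.inr ⟨q, rfl⟩

lemma card_Φ (p : Finset (Fin m) × ((Fin m × Fin t) → Fin 2)) (h3 : p.1.card = 3) :
    (Φ p).card = m * t + 3 := by
  rw [Φ, card_union_of_disjoint, card_image_of_injective, card_image_of_injective, h3]
  · simp [card_univ, Nat.add_comm]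
  · intro a b h
    simp only [Option.some.injEq, Sum.inr.injEq, Prod.mk.injEq] at h
    exact Prod.ext h.1 h.2.1
  · intro a b h
    simpa using h
  · rw [disjoint_left]
    rintro v hv hv'
    simp only [mem_image, mem_univ, true_and] at hv hv'
    obtain ⟨i, _, rfl⟩ := hv
    obtain ⟨q, hq⟩ := hv'
    simp at hq

lemma indep_Φ (p : Finset (Fin m) × ((Fin m × Fin t) → Fin 2))
    (hp : ∀ q : Fin m × Fin t, q.1 ∈ p.1 → p.2 q = 1)
    {u w : TV m t} (hu : u ∈ Φ p) (hw : w ∈ Φ p) : ¬ (treeT m t).Adj u w := by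
  rw [mem_Φ] at hu hw
  intro h
  rw [treeT, SimpleGraph.fromRel_adj] at h
  obtain ⟨hne, h⟩ := h
  rcases hu with ⟨i, hi, rfl⟩ | ⟨q, rfl⟩ <;> rcases hw with ⟨i', hi', rfl⟩ | ⟨q', rfl⟩ <;>
    simp only [Option.some.injEq, Sum.inl.injEq, Sum.inr.injEq, Prod.mk.injEq,
      reduceCtorEq, false_and, and_false, exists_false, or_false, false_or,
      exists_and_left, exists_and_right, exists_eq_left, exists_eq_right,
      exists_eq_left'] at h
  · obtain ⟨h1, -, h4⟩ := h
    have := hp q' (h1 ▸ hi)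
    rw [this] at h4
    exact absurd h4 (by decide)
  · obtain ⟨h1, -, h4⟩ := h
    have := hp q (h1 ▸ hi')
    rw [this] at h4
    exact absurd h4 (by decide)
  · rcases h with ⟨i1, j, ⟨a1, a2, a3⟩, b1, b2, b3⟩ | ⟨i1, j, ⟨a1, a2, a3⟩, b1, b2, b3⟩
    · have hq : q = q' := Prod.ext (a1.trans b1.symm) (a2.trans b2.symm)
      rw [hq, b3] at a3
      exact absurd a3 (by decide)
    · have hq : q' = q := Prod.ext (a1.trans b1.symm) (a2.trans b2.symm)
      rw [hq, b3] at a3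
      exact absurd a3 (by decide)

lemma Φ_inj {p p' : Finset (Fin m) × ((Fin m × Fin t) → Fin 2)} (h : Φ p = Φ p') : p = p' := by
  have key : ∀ (r : Finset (Fin m) × ((Fin m × Fin t) → Fin 2)) (i : Fin m),
      (some (Sum.inl i) ∈ Φ r ↔ i ∈ r.1) := by
    intro r i
    rw [mem_Φ]
    constructor
    · rintro (⟨i', hi', he⟩ | ⟨q, hq⟩)
      · simp only [Option.some.injEq, Sum.inl.injEq] at he
        exact he ▸ hi'
      · simp at hq
    · intro hi
      exact Or.inl ⟨i, hi, rfl⟩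
  have hS : p.1 = p'.1 := by
    ext i
    rw [← key p i, ← key p' i, h]
  have hf : p.2 = p'.2 := by
    funext q
    have h1 : (some (Sum.inr (q.1, q.2, p.2 q)) : TV m t) ∈ Φ p' := by
      rw [← h, mem_Φ]; exact Or.inr ⟨q, rfl⟩
    rw [mem_Φ] at h1
    rcases h1 with ⟨i, _, he⟩ | ⟨q', he⟩
    · simp at he
    · simp only [Option.some.injEq, Sum.inr.injEq, Prod.mk.injEq] at he
      obtain ⟨h1, h2, h3⟩ := he
      rw [show q' = q from (Prod.ext h1 h2).symm] at h3
      exact h3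
  exact Prod.ext hS hf

noncomputable def D (m t : ℕ) : Finset (Finset (Fin m) × ((Fin m × Fin t) → Fin 2)) :=
  ((Finset.univ.powersetCard 3) ×ˢ Finset.univ).filter
    (fun p => ∀ q : Fin m × Fin t, q.1 ∈ p.1 → p.2 q = 1)

lemma mem_D {p : Finset (Fin m) × ((Fin m × Fin t) → Fin 2)} :
    p ∈ D m t ↔ p.1.card = 3 ∧ ∀ q : Fin m × Fin t, q.1 ∈ p.1 → p.2 q = 1 := by
  simp [D, Finset.mem_filter, Finset.mem_product, Finset.mem_powersetCard_univ]

lemma D_eq : D m t = (Finset.univ.powersetCard 3).biUnion (fun S =>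
    ({S} : Finset (Finset (Fin m))) ×ˢ Fintype.piFinset
      (fun q : Fin m × Fin t => if q.1 ∈ S then ({1} : Finset (Fin 2)) else Finset.univ)) := by
  ext p
  rw [mem_D]
  simp only [Finset.mem_biUnion, Finset.mem_powersetCard_univ, Finset.mem_product,
    Finset.mem_singleton, Fintype.mem_piFinset]
  constructor
  · rintro ⟨h3, hf⟩
    refine ⟨p.1, h3, rfl, fun q => ?_⟩
    by_cases hq : q.1 ∈ p.1 <;> simp [hq, hf q]
  · rintro ⟨S, h3, rfl, hf⟩
    refine ⟨h3, fun q hq => ?_⟩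
    have := hf q
    simpa [hq] using this

lemma card_D (hm : 3 ≤ m) : (D m t).card = m.choose 3 * 2 ^ (m * t - 3 * t) := by
  rw [D_eq, Finset.card_biUnion]
  · have hconst : ∀ S ∈ Finset.univ.powersetCard 3, (({S} : Finset (Finset (Fin m))) ×ˢ
        Fintype.piFinset (fun q : Fin m × Fin t =>
          if q.1 ∈ S then ({1} : Finset (Fin 2)) else Finset.univ)).card
        = 2 ^ (m * t - 3 * t) := by
      intro S hS
      rw [Finset.mem_powersetCard_univ] at hS
      rw [Finset.card_product, Finset.card_singleton, one_mul, Fintype.card_piFinset]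
      have : ∀ q : Fin m × Fin t, (if q.1 ∈ S then ({1} : Finset (Fin 2)) else Finset.univ).card
          = if q.1 ∈ S then 1 else 2 := by
        intro q
        by_cases hq : q.1 ∈ S <;> simp [hq]
      rw [Finset.prod_congr rfl (fun q _ => this q), Finset.prod_ite, Finset.prod_const,
        Finset.prod_const, one_pow, one_mul]
      congr 1
      have : Finset.univ.filter (fun q : Fin m × Fin t => ¬ q.1 ∈ S) = Sᶜ ×ˢ Finset.univ := by
        ext q
        simp [Finset.mem_product]
      rw [this, Finset.card_product, Finset.card_compl, Finset.card_univ, Fintype.card_fin, hS,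
        Nat.sub_mul, Fintype.card_fin]
    rw [Finset.sum_congr rfl hconst, Finset.sum_const, Finset.card_powersetCard,
      Finset.card_univ, Fintype.card_fin, smul_eq_mul]
  · intro S hS S' hS' hne
    simp only [Finset.disjoint_left]
    rintro p hp hp'
    rw [Finset.mem_product, Finset.mem_singleton] at hp hp'
    exact hne (hp.1 ▸ hp'.1 ▸ rfl)

end Stmt14

/-- For `m ≥ 3`, the number of independent sets of size `mt+3` in `T_{m,t,1}`
is at least `C(m,3)·2^{mt-3t}`. -/
theorem stmt_14 (m t : ℕ) (hm : 3 ≤ m) :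
    m.choose 3 * 2 ^ (m * t - 3 * t) ≤ indepCount (treeT m t) (m * t + 3) := by
  rw [← Stmt14.card_D hm, indepCount]
  apply Finset.card_le_card_of_injOn Stmt14.Φ
  · intro p hp
    rw [Finset.mem_coe, Stmt14.mem_D] at hp
    simp only [Finset.mem_coe, Finset.mem_filter, Finset.mem_univ, true_and]
    exact ⟨Stmt14.card_Φ p hp.1, fun u hu w hw => Stmt14.indep_Φ p hp.2 hu hw⟩
  · intro p _ p' _ h
    exact Stmt14.Φ_inj h
end

section
/- In the tree T_{m,t,1}, every independent set of size mt+2 that does not contain the root v contains at least 3 of the vertices w_1,...,w_m, OR exactly 2 of them; it cannot contain 0 or 1 of them. In particular, the number of independent sets of size mt+2 not containing v and containing exactly 2 of the w_i equals C(m,2)·2^{mt-2t}. -/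
open Classical Finset

section
variable {m t : ℕ}

lemma fin2cases (c : Fin 2) : c = 0 ∨ c = 1 := by revert c; decide

lemma adj_ww (i i' : Fin m) : ¬ (treeT m t).Adj (some (Sum.inl i)) (some (Sum.inl i')) := by
  simp [treeT, SimpleGraph.fromRel_adj]

lemma adj_wz (i i' : Fin m) (j : Fin t) (c : Fin 2) :
    (treeT m t).Adj (some (Sum.inl i)) (some (Sum.inr (i', j, c))) ↔ i = i' ∧ c = 0 := by
  constructor
  · intro h
    simp only [treeT, SimpleGraph.fromRel_adj] at h
    rcases h with ⟨-, h | h⟩ <;>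
      rcases h with h | h | h <;> simp_all
  · rintro ⟨rfl, rfl⟩
    simp [treeT, SimpleGraph.fromRel_adj]

lemma adj_zz (i i' : Fin m) (j j' : Fin t) (c c' : Fin 2) :
    (treeT m t).Adj (some (Sum.inr (i, j, c))) (some (Sum.inr (i', j', c'))) ↔
      i = i' ∧ j = j' ∧ c ≠ c' := by
  constructor
  · intro h
    simp only [treeT, SimpleGraph.fromRel_adj] at h
    rcases h with ⟨hne, h | h⟩ <;>
      rcases h with h | h | h <;>
      first
        | (obtain ⟨i1, j1, ⟨rfl, rfl, rfl⟩, rfl, rfl, rfl⟩ := h; exact ⟨rfl, rfl, by decide⟩)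
        | simp_all
  · rintro ⟨rfl, rfl, hc⟩
    fin_cases c <;> fin_cases c' <;> simp_all [treeT, SimpleGraph.fromRel_adj]

noncomputable def Phi (A : Finset (Fin m)) (g : Fin m × Fin t → Fin 2) : Finset (TV m t) :=
  A.image (fun i => some (Sum.inl i)) ∪
  (univ : Finset (Fin m × Fin t)).image (fun p => some (Sum.inr (p.1, p.2, g p)))

lemma mem_Phi {A : Finset (Fin m)} {g : Fin m × Fin t → Fin 2} {v : TV m t} :
    v ∈ Phi A g ↔ (∃ i ∈ A, v = some (Sum.inl i)) ∨
      (∃ p : Fin m × Fin t, v = some (Sum.inr (p.1, p.2, g p))) := by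
  simp [Phi, eq_comm]

lemma card_Phi (A : Finset (Fin m)) (g : Fin m × Fin t → Fin 2) :
    (Phi A g).card = A.card + m * t := by
  rw [Phi, card_union_of_disjoint, card_image_of_injective, card_image_of_injective]
  · simp [Fintype.card_prod]
  · rintro ⟨p1, p2⟩ ⟨q1, q2⟩ h
    simp only [Option.some.injEq, Sum.inr.injEq, Prod.mk.injEq] at h
    exact Prod.ext h.1 h.2.1
  · intro a b h
    simpa using h
  · simp only [disjoint_left, mem_image]
    rintro v ⟨i, -, rfl⟩ ⟨p, -, h⟩
    simp at h

lemma filter_Phi (A : Finset (Fin m)) (g : Fin m × Fin t → Fin 2) :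
    (Phi A g).filter (fun v => ∃ i, v = some (Sum.inl i)) =
      A.image (fun i => some (Sum.inl i)) := by
  ext v
  simp only [mem_filter, mem_Phi, mem_image]
  constructor
  · rintro ⟨h, i, rfl⟩
    rcases h with ⟨i', hi', h⟩ | ⟨p, hp⟩
    · exact ⟨i', hi', h.symm⟩
    · simp at hp
  · rintro ⟨i, hi, rfl⟩
    exact ⟨Or.inl ⟨i, hi, rfl⟩, i, rfl⟩

lemma indep_Phi (A : Finset (Fin m)) (g : Fin m × Fin t → Fin 2)
    (hg : ∀ i ∈ A, ∀ j, g (i, j) = 1) :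
    ∀ u ∈ Phi A g, ∀ w ∈ Phi A g, ¬ (treeT m t).Adj u w := by
  intro u hu w hw hadj
  rcases mem_Phi.1 hu with ⟨i, hi, rfl⟩ | ⟨⟨p1, p2⟩, rfl⟩ <;>
    rcases mem_Phi.1 hw with ⟨i', hi', rfl⟩ | ⟨⟨q1, q2⟩, rfl⟩
  · exact adj_ww i i' hadj
  · obtain ⟨rfl, h0⟩ := (adj_wz _ _ _ _).1 hadj
    rw [hg i hi q2] at h0
    exact absurd h0 (by decide)
  · obtain ⟨rfl, h0⟩ := (adj_wz _ _ _ _).1 hadj.symm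
    rw [hg i' hi' p2] at h0
    exact absurd h0 (by decide)
  · obtain ⟨rfl, rfl, h3⟩ := (adj_zz _ _ _ _ _ _).1 hadj
    exact h3 rfl

/-- every element of an independent set avoiding the root which is not a `w_i`
determines a distinct pair `(i,j)`. -/
noncomputable def idx : TV m t → Option (Fin m × Fin t) := fun v =>
  match v with
  | some (Sum.inr (i, j, _)) => some (i, j)
  | _ => none

lemma rest_card_le (s : Finset (TV m t))
    (hind : ∀ u ∈ s, ∀ w ∈ s, ¬ (treeT m t).Adj u w) (hnone : none ∉ s) :
    (s.filter (fun v => ¬ ∃ i, v = some (Sum.inl i))).card ≤ m * t := by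
  have h := Finset.card_le_card_of_injOn (f := idx)
    (s := s.filter (fun v => ¬ ∃ i, v = some (Sum.inl i)))
    (t := (univ : Finset (Fin m × Fin t)).image some) ?_ ?_
  · calc _ ≤ _ := h
      _ ≤ (univ : Finset (Fin m × Fin t)).card := card_image_le
      _ = m * t := by simp [Fintype.card_prod]
  · rintro v hv
    rw [mem_coe, mem_filter] at hv
    obtain ⟨hvs, hnl⟩ := hv
    rcases v with _ | (i | ⟨i, j, c⟩)
    · exact absurd hvs hnone
    · exact absurd ⟨i, rfl⟩ hnl
    · simp [idx]
  · rintro u hu v hv h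
    rw [coe_filter, Set.mem_setOf_eq] at hu hv
    obtain ⟨hus, hul⟩ := hu
    obtain ⟨hvs, hvl⟩ := hv
    rcases u with _ | (i | ⟨i, j, c⟩)
    · exact absurd hus hnone
    · exact absurd ⟨i, rfl⟩ hul
    rcases v with _ | (i' | ⟨i', j', c'⟩)
    · exact absurd hvs hnone
    · exact absurd ⟨i', rfl⟩ hvl
    simp only [idx, Option.some.injEq, Prod.mk.injEq] at h
    obtain ⟨rfl, rfl⟩ := h
    by_cases hc : c = c'
    · subst hc; rfl
    · exact absurd ((adj_zz i i j j c c').2 ⟨rfl, rfl, hc⟩) (hind _ hus _ hvs)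

end
section
variable {m t : ℕ}

lemma exists_unique_z (s : Finset (TV m t))
    (hind : ∀ u ∈ s, ∀ w ∈ s, ¬ (treeT m t).Adj u w)
    (hcard : s.card = m * t + 2) (hnone : none ∉ s)
    (hW : (s.filter (fun v => ∃ i, v = some (Sum.inl i))).card = 2) :
    ∀ p : Fin m × Fin t, ∃ c, some (Sum.inr (p.1, p.2, c)) ∈ s := by
  set R := s.filter (fun v => ¬ ∃ i, v = some (Sum.inl i)) with hR
  have hsplit : (s.filter (fun v => ∃ i, v = some (Sum.inl i))).card + R.card = s.card := by
    rw [hR]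
    simpa using Finset.card_filter_add_card_filter_not
      (s := s) (p := fun v => ∃ i, v = some (Sum.inl i))
  have hRcard : R.card = m * t := by omega
  -- idx is injective on R and maps into univ.image some
  have hmaps : ∀ v ∈ R, idx v ∈ (univ : Finset (Fin m × Fin t)).image some := by
    rintro v hv
    rw [hR, mem_filter] at hv
    obtain ⟨hvs, hnl⟩ := hv
    rcases v with _ | (i | ⟨i, j, c⟩)
    · exact absurd hvs hnone
    · exact absurd ⟨i, rfl⟩ hnl
    · simp [idx]
  have hinj : Set.InjOn idx (R : Set (TV m t)) := by
    rintro u hu v hv h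
    rw [hR, coe_filter, Set.mem_setOf_eq] at hu hv
    obtain ⟨hus, hul⟩ := hu
    obtain ⟨hvs, hvl⟩ := hv
    rcases u with _ | (i | ⟨i, j, c⟩)
    · exact absurd hus hnone
    · exact absurd ⟨i, rfl⟩ hul
    rcases v with _ | (i' | ⟨i', j', c'⟩)
    · exact absurd hvs hnone
    · exact absurd ⟨i', rfl⟩ hvl
    simp only [idx, Option.some.injEq, Prod.mk.injEq] at h
    obtain ⟨rfl, rfl⟩ := h
    by_cases hc : c = c'
    · subst hc; rfl
    · exact absurd ((adj_zz i i j j c c').2 ⟨rfl, rfl, hc⟩) (hind _ hus _ hvs)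
  have himg : R.image idx = (univ : Finset (Fin m × Fin t)).image some := by
    apply Finset.eq_of_subset_of_card_le
    · intro v hv
      obtain ⟨u, hu, rfl⟩ := mem_image.1 hv
      exact hmaps u hu
    · rw [Finset.card_image_of_injOn hinj, hRcard,
        Finset.card_image_of_injective _ (Option.some_injective _)]
      simp [Fintype.card_prod]
  intro p
  have hp : some p ∈ R.image idx := by
    rw [himg]; exact mem_image_of_mem _ (mem_univ p)
  obtain ⟨v, hv, hvp⟩ := mem_image.1 hp
  rw [hR, mem_filter] at hv
  obtain ⟨hvs, hnl⟩ := hv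
  rcases v with _ | (i | ⟨i, j, c⟩)
  · exact absurd hvs hnone
  · exact absurd ⟨i, rfl⟩ hnl
  · simp only [idx, Option.some.injEq] at hvp
    subst hvp
    exact ⟨c, hvs⟩

lemma struct_lemma (s : Finset (TV m t))
    (hind : ∀ u ∈ s, ∀ w ∈ s, ¬ (treeT m t).Adj u w)
    (hcard : s.card = m * t + 2) (hnone : none ∉ s)
    (hW : (s.filter (fun v => ∃ i, v = some (Sum.inl i))).card = 2) :
    ∃ (A : Finset (Fin m)) (g : Fin m × Fin t → Fin 2),
      A.card = 2 ∧ (∀ i ∈ A, ∀ j, g (i, j) = 1) ∧ s = Phi A g := by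
  set A : Finset (Fin m) := univ.filter (fun i => some (Sum.inl i) ∈ s) with hA
  have hmemA : ∀ i, i ∈ A ↔ some (Sum.inl i) ∈ s := by
    intro i; simp [hA]
  have hfA : s.filter (fun v => ∃ i, v = some (Sum.inl i)) =
      A.image (fun i => some (Sum.inl i)) := by
    ext v
    simp only [mem_filter, mem_image]
    constructor
    · rintro ⟨hvs, i, rfl⟩
      exact ⟨i, (hmemA i).2 hvs, rfl⟩
    · rintro ⟨i, hi, rfl⟩
      exact ⟨(hmemA i).1 hi, i, rfl⟩
  have hAcard : A.card = 2 := by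
    rw [hfA, Finset.card_image_of_injective] at hW
    · exact hW
    · intro a b h; simpa using h
  have hex := exists_unique_z s hind hcard hnone hW
  have huniq : ∀ (p : Fin m × Fin t) (c c' : Fin 2),
      some (Sum.inr (p.1, p.2, c)) ∈ s → some (Sum.inr (p.1, p.2, c')) ∈ s → c = c' := by
    intro p c c' hc hc'
    by_contra hne
    exact absurd ((adj_zz _ _ _ _ c c').2 ⟨rfl, rfl, hne⟩) (hind _ hc _ hc')
  set g : Fin m × Fin t → Fin 2 :=
    fun p => if some (Sum.inr (p.1, p.2, 1)) ∈ s then 1 else 0 with hg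
  have hmemz : ∀ (p : Fin m × Fin t) (c : Fin 2),
      some (Sum.inr (p.1, p.2, c)) ∈ s ↔ c = g p := by
    intro p c
    constructor
    · intro hc
      rcases fin2cases c with rfl | rfl
      · have h1 : some (Sum.inr (p.1, p.2, 1)) ∉ s := by
          intro h1
          exact absurd (huniq p 0 1 hc h1) (by decide)
        simp [hg, h1]
      · simp [hg, hc]
    · rintro rfl
      obtain ⟨c0, hc0⟩ := hex p
      rcases fin2cases c0 with rfl | rfl
      · have h1 : some (Sum.inr (p.1, p.2, 1)) ∉ s := by
          intro h1
          exact absurd (huniq p 0 1 hc0 h1) (by decide)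
        simpa [hg, h1] using hc0
      · simpa [hg, hc0] using hc0
  have hgA : ∀ i ∈ A, ∀ j, g (i, j) = 1 := by
    intro i hi j
    have hwi := (hmemA i).1 hi
    rcases fin2cases (g (i, j)) with h0 | h1
    · have := (hmemz (i, j) 0).2 h0.symm
      exact absurd ((adj_wz i i j 0).2 ⟨rfl, rfl⟩) (hind _ hwi _ this)
    · exact h1
  refine ⟨A, g, hAcard, hgA, ?_⟩
  ext v
  rw [mem_Phi]
  constructor
  · intro hv
    rcases v with _ | (i | ⟨i, j, c⟩)
    · exact absurd hv hnone
    · exact Or.inl ⟨i, (hmemA i).2 hv, rfl⟩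
    · exact Or.inr ⟨(i, j), by rw [(hmemz (i, j) c).1 hv]⟩
  · rintro (⟨i, hi, rfl⟩ | ⟨p, rfl⟩)
    · exact (hmemA i).1 hi
    · exact (hmemz p (g p)).2 rfl

lemma Phi_inj (A A' : Finset (Fin m)) (g g' : Fin m × Fin t → Fin 2)
    (h : Phi A g = Phi A' g') : A = A' ∧ g = g' := by
  have hA : A = A' := by
    ext i
    have h1 : (some (Sum.inl i) : TV m t) ∈ Phi A g ↔ i ∈ A := by
      rw [mem_Phi]
      constructor
      · rintro (⟨i', hi', hh⟩ | ⟨p, hp⟩)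
        · simp only [Option.some.injEq, Sum.inl.injEq] at hh; rwa [hh]
        · simp at hp
      · intro hi; exact Or.inl ⟨i, hi, rfl⟩
    have h2 : (some (Sum.inl i) : TV m t) ∈ Phi A' g' ↔ i ∈ A' := by
      rw [mem_Phi]
      constructor
      · rintro (⟨i', hi', hh⟩ | ⟨p, hp⟩)
        · simp only [Option.some.injEq, Sum.inl.injEq] at hh; rwa [hh]
        · simp at hp
      · intro hi; exact Or.inl ⟨i, hi, rfl⟩
    rw [← h1, h, h2]
  refine ⟨hA, funext fun p => ?_⟩
  have hp : (some (Sum.inr (p.1, p.2, g p)) : TV m t) ∈ Phi A' g' := by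
    rw [← h, mem_Phi]; exact Or.inr ⟨p, rfl⟩
  rw [mem_Phi] at hp
  rcases hp with ⟨i, hi, hh⟩ | ⟨⟨q1, q2⟩, hq⟩
  · simp at hh
  · simp only [Option.some.injEq, Sum.inr.injEq, Prod.mk.injEq] at hq
    obtain ⟨h1, h2, h3⟩ := hq
    rw [h3]
    congr 1
    exact Prod.ext h1.symm h2.symm

lemma count_g (A : Finset (Fin m)) (hA : A.card = 2) (hm : 2 ≤ m) :
    ((univ : Finset (Fin m × Fin t → Fin 2)).filter
      (fun g => ∀ i ∈ A, ∀ j, g (i, j) = 1)).card = 2 ^ (m * t - 2 * t) := by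
  have heq : (univ : Finset (Fin m × Fin t → Fin 2)).filter
      (fun g => ∀ i ∈ A, ∀ j, g (i, j) = 1) =
      Fintype.piFinset (fun p : Fin m × Fin t =>
        if p.1 ∈ A then ({1} : Finset (Fin 2)) else univ) := by
    ext g
    simp only [mem_filter, mem_univ, true_and, Fintype.mem_piFinset]
    constructor
    · intro hg p
      by_cases hp : p.1 ∈ A
      · simp [hp, hg p.1 hp p.2]
      · simp [hp]
    · intro hg i hi j
      have := hg (i, j)
      simpa [hi] using this
  rw [heq, Fintype.card_piFinset]
  have : ∀ p : Fin m × Fin t,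
      (if p.1 ∈ A then ({1} : Finset (Fin 2)) else univ).card =
      if p.1 ∈ A then 1 else 2 := by
    intro p; split_ifs <;> simp
  simp_rw [this]
  rw [Finset.prod_ite, Finset.prod_const_one, Finset.prod_const, one_mul]
  congr 1
  have hfe : (univ : Finset (Fin m × Fin t)).filter (fun p => ¬ p.1 ∈ A) =
      Aᶜ ×ˢ (univ : Finset (Fin t)) := by
    ext p; simp [Finset.mem_product]
  rw [hfe, Finset.card_product, Finset.card_compl, hA, Fintype.card_fin,
    Finset.card_univ, Fintype.card_fin, Nat.sub_mul]

end
/-- Every independent set of size `mt+2` in `T_{m,t,1}` avoiding the root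
contains at least 2 of the `w_i` (it cannot contain 0 or 1 of them), and the
number of such sets containing exactly 2 of the `w_i` is `C(m,2)·2^{mt-2t}`. -/
theorem stmt_15 (m t : ℕ) (hm : 2 ≤ m) (ht : 1 ≤ t) :
    (∀ s : Finset (TV m t), (∀ u ∈ s, ∀ w ∈ s, ¬ (treeT m t).Adj u w) →
      s.card = m * t + 2 → none ∉ s →
      2 ≤ (s.filter (fun v => ∃ i, v = some (Sum.inl i))).card) ∧
    (Finset.univ.filter (fun s : Finset (TV m t) =>
      s.card = m * t + 2 ∧ none ∉ s ∧
      (s.filter (fun v => ∃ i, v = some (Sum.inl i))).card = 2 ∧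
      ∀ u ∈ s, ∀ w ∈ s, ¬ (treeT m t).Adj u w)).card
        = m.choose 2 * 2 ^ (m * t - 2 * t) := by
  constructor
  · intro s hind hcard hnone
    have hle := rest_card_le s hind hnone
    have hsplit : (s.filter (fun v => ∃ i, v = some (Sum.inl i))).card +
        (s.filter (fun v => ¬ ∃ i, v = some (Sum.inl i))).card = s.card := by
      simpa using Finset.card_filter_add_card_filter_not
        (s := s) (p := fun v => ∃ i, v = some (Sum.inl i))
    omega
  · set D := (Finset.powersetCard 2 (univ : Finset (Fin m))).sigma
      (fun A => (univ : Finset (Fin m × Fin t → Fin 2)).filter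
        (fun g => ∀ i ∈ A, ∀ j, g (i, j) = 1)) with hD
    have hbij : D.card = (Finset.univ.filter (fun s : Finset (TV m t) =>
        s.card = m * t + 2 ∧ none ∉ s ∧
        (s.filter (fun v => ∃ i, v = some (Sum.inl i))).card = 2 ∧
        ∀ u ∈ s, ∀ w ∈ s, ¬ (treeT m t).Adj u w)).card := by
      refine Finset.card_bij (fun a _ => Phi a.1 a.2) ?_ ?_ ?_
      · rintro ⟨A, g⟩ ha
        rw [hD, Finset.mem_sigma, Finset.mem_powersetCard_univ, mem_filter] at ha
        obtain ⟨hA, -, hg⟩ := ha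
        rw [mem_filter]
        refine ⟨mem_univ _, ?_, ?_, ?_, indep_Phi A g hg⟩
        · rw [card_Phi, hA]; ring
        · intro hcon
          rcases mem_Phi.1 hcon with ⟨i, -, h⟩ | ⟨p, h⟩ <;> simp at h
        · rw [filter_Phi, Finset.card_image_of_injective, hA]
          intro a b h; simpa using h
      · rintro ⟨A, g⟩ ha ⟨A', g'⟩ ha' h
        obtain ⟨h1, h2⟩ := Phi_inj A A' g g' h
        subst h1; subst h2; rfl
      · intro s hs
        rw [mem_filter] at hs
        obtain ⟨-, hcard, hnone, hW, hind⟩ := hs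
        obtain ⟨A, g, hA, hg, rfl⟩ := struct_lemma s hind hcard hnone hW
        refine ⟨⟨A, g⟩, ?_, rfl⟩
        rw [hD, Finset.mem_sigma, Finset.mem_powersetCard_univ, mem_filter]
        exact ⟨hA, mem_univ _, hg⟩
    rw [← hbij, hD, Finset.card_sigma]
    rw [Finset.sum_congr rfl (fun A hA => count_g A (Finset.mem_powersetCard_univ.1 hA) hm)]
    rw [Finset.sum_const, Finset.card_powersetCard, Finset.card_univ, Fintype.card_fin,
      smul_eq_mul]
end

section
/- Fix integers s, t, m with 3 ≤ s ≤ m and t ≥ 1. The number of independent sets of size mt+2 in T_{m,t,1} that avoid the root and contain exactly s of the vertices w_1,...,w_m equals Σ_{ℓ=0}^{min(s-2, mt-st)} C(m,s)·C(mt-st, ℓ)·C(st, s-2-ℓ)·2^{mt-st-ℓ}. -/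
open Classical Finset

namespace Aux16
variable {m t : ℕ}

def vw (i : Fin m) : TV m t := some (Sum.inl i)
def vx (p : Fin m × Fin t) : TV m t := some (Sum.inr (p.1, p.2, 0))
def vy (p : Fin m × Fin t) : TV m t := some (Sum.inr (p.1, p.2, 1))

lemma vw_inj : Function.Injective (vw (m := m) (t := t)) := by
  intro a b h; simpa [vw] using h
lemma vx_inj : Function.Injective (vx (m := m) (t := t)) := by
  intro a b h; simp only [vx, Option.some.injEq, Sum.inr.injEq, Prod.mk.injEq] at h
  exact Prod.ext h.1 h.2.1
lemma vy_inj : Function.Injective (vy (m := m) (t := t)) := by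
  intro a b h; simp only [vy, Option.some.injEq, Sum.inr.injEq, Prod.mk.injEq] at h
  exact Prod.ext h.1 h.2.1

def enc (S : Finset (Fin m)) (B0 B1 : Finset (Fin m × Fin t)) : Finset (TV m t) :=
  S.image vw ∪ B0.image vx ∪ B1.image vy

lemma none_not_mem_enc (S : Finset (Fin m)) (B0 B1 : Finset (Fin m × Fin t)) :
    none ∉ enc S B0 B1 := by
  simp [enc, vw, vx, vy]

lemma vw_mem_enc {S : Finset (Fin m)} {B0 B1 : Finset (Fin m × Fin t)} {i : Fin m} :
    vw i ∈ enc S B0 B1 ↔ i ∈ S := by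
  simp only [enc, mem_union, mem_image]
  constructor
  · rintro ((⟨a, ha, h⟩ | ⟨a, ha, h⟩) | ⟨a, ha, h⟩)
    · rwa [vw_inj h] at ha
    · simp [vw, vx] at h
    · simp [vw, vy] at h
  · exact fun h => Or.inl (Or.inl ⟨i, h, rfl⟩)

lemma vx_mem_enc {S : Finset (Fin m)} {B0 B1 : Finset (Fin m × Fin t)} {p : Fin m × Fin t} :
    vx p ∈ enc S B0 B1 ↔ p ∈ B0 := by
  simp only [enc, mem_union, mem_image]
  constructor
  · rintro ((⟨a, ha, h⟩ | ⟨a, ha, h⟩) | ⟨a, ha, h⟩)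
    · simp [vw, vx] at h
    · rwa [vx_inj h] at ha
    · simp [vx, vy, Prod.ext_iff] at h
  · exact fun h => Or.inl (Or.inr ⟨p, h, rfl⟩)

lemma vy_mem_enc {S : Finset (Fin m)} {B0 B1 : Finset (Fin m × Fin t)} {p : Fin m × Fin t} :
    vy p ∈ enc S B0 B1 ↔ p ∈ B1 := by
  simp only [enc, mem_union, mem_image]
  constructor
  · rintro ((⟨a, ha, h⟩ | ⟨a, ha, h⟩) | ⟨a, ha, h⟩)
    · simp [vw, vy] at h
    · simp [vx, vy, Prod.ext_iff] at h
    · rwa [vy_inj h] at ha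
  · exact fun h => Or.inr ⟨p, h, rfl⟩

lemma card_enc (S : Finset (Fin m)) (B0 B1 : Finset (Fin m × Fin t)) :
    (enc S B0 B1).card = S.card + B0.card + B1.card := by
  rw [enc, card_union_of_disjoint, card_union_of_disjoint, card_image_of_injective _ vw_inj,
    card_image_of_injective _ vx_inj, card_image_of_injective _ vy_inj]
  · simp only [disjoint_left, mem_image]
    rintro v ⟨a, _, rfl⟩ ⟨b, _, h⟩
    simp [vw, vx, Prod.ext_iff] at h
  · simp only [disjoint_left, mem_union, mem_image]
    rintro v (⟨a, _, rfl⟩ | ⟨a, _, rfl⟩) ⟨b, _, h⟩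
    · simp [vw, vy] at h
    · simp [vx, vy, Prod.ext_iff] at h

end Aux16

namespace Aux16
variable {m t : ℕ}

noncomputable def decS (A : Finset (TV m t)) : Finset (Fin m) :=
  univ.filter (fun i => vw i ∈ A)
noncomputable def dec0 (A : Finset (TV m t)) : Finset (Fin m × Fin t) :=
  univ.filter (fun p => vx p ∈ A)
noncomputable def dec1 (A : Finset (TV m t)) : Finset (Fin m × Fin t) :=
  univ.filter (fun p => vy p ∈ A)

lemma enc_dec {A : Finset (TV m t)} (hA : none ∉ A) :
    enc (decS A) (dec0 A) (dec1 A) = A := by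
  ext v
  match v with
  | none => simp [none_not_mem_enc, hA]
  | some (Sum.inl i) =>
      rw [show (some (Sum.inl i) : TV m t) = vw i from rfl, vw_mem_enc]
      simp [decS]
  | some (Sum.inr (i, j, k)) =>
      match k with
      | 0 => rw [show (some (Sum.inr (i,j,0)) : TV m t) = vx (i,j) from rfl, vx_mem_enc]
             rw [dec0, mem_filter]; exact ⟨fun h => h.2, fun h => ⟨mem_univ _, h⟩⟩
      | 1 => rw [show (some (Sum.inr (i,j,1)) : TV m t) = vy (i,j) from rfl, vy_mem_enc]
             rw [dec1, mem_filter]; exact ⟨fun h => h.2, fun h => ⟨mem_univ _, h⟩⟩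

lemma decS_enc (S : Finset (Fin m)) (B0 B1 : Finset (Fin m × Fin t)) :
    decS (enc S B0 B1) = S := by
  ext i; simp [decS, vw_mem_enc]
lemma dec0_enc (S : Finset (Fin m)) (B0 B1 : Finset (Fin m × Fin t)) :
    dec0 (enc S B0 B1) = B0 := by
  ext p; simp [dec0, vx_mem_enc]
lemma dec1_enc (S : Finset (Fin m)) (B0 B1 : Finset (Fin m × Fin t)) :
    dec1 (enc S B0 B1) = B1 := by
  ext p; simp [dec1, vy_mem_enc]

lemma filter_w_eq (A : Finset (TV m t)) :
    A.filter (fun v => ∃ i, v = some (Sum.inl i)) = (decS A).image vw := by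
  ext v
  simp only [mem_filter, mem_image, decS, mem_filter, mem_univ, true_and]
  constructor
  · rintro ⟨hv, i, rfl⟩; exact ⟨i, hv, rfl⟩
  · rintro ⟨i, hi, rfl⟩; exact ⟨hi, i, rfl⟩

lemma indep_iff {A : Finset (TV m t)} (hA : none ∉ A) :
    (∀ u ∈ A, ∀ w ∈ A, ¬ (treeT m t).Adj u w) ↔
      ((∀ p : Fin m × Fin t, vx p ∈ A → vw p.1 ∉ A) ∧
       (∀ p : Fin m × Fin t, vx p ∈ A → vy p ∉ A)) := by
  constructor
  · intro h
    constructor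
    · intro p hx hw
      refine h _ hw _ hx ?_
      simp only [treeT, SimpleGraph.fromRel_adj]
      exact ⟨by simp [vw, vx], Or.inl (Or.inr (Or.inl ⟨p.1, p.2, rfl, rfl⟩))⟩
    · intro p hx hy
      refine h _ hx _ hy ?_
      simp only [treeT, SimpleGraph.fromRel_adj]
      refine ⟨by simp [vx, vy, Prod.ext_iff], Or.inl (Or.inr (Or.inr ⟨p.1, p.2, rfl, rfl⟩))⟩
  · rintro ⟨h1, h2⟩ u hu w hw hadj
    rw [treeT, SimpleGraph.fromRel_adj] at hadj
    obtain ⟨hne, h | h⟩ := hadj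
    · rcases h with (⟨rfl, _⟩ | ⟨i, j, rfl, rfl⟩ | ⟨i, j, rfl, rfl⟩)
      · exact hA hu
      · exact h1 (i, j) hw hu
      · exact h2 (i, j) hu hw
    · rcases h with (⟨rfl, _⟩ | ⟨i, j, rfl, rfl⟩ | ⟨i, j, rfl, rfl⟩)
      · exact hA hw
      · exact h1 (i, j) hu hw
      · exact h2 (i, j) hw hu

end Aux16

namespace Aux16
variable {m t : ℕ}

abbrev Triple (m t : ℕ) := Finset (Fin m) × Finset (Fin m × Fin t) × Finset (Fin m × Fin t)

noncomputable def Tset (m t s : ℕ) : Finset (Triple m t) :=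
  univ.filter (fun q => q.1.card = s ∧ (∀ p ∈ q.2.1, p.1 ∉ q.1) ∧
    Disjoint q.2.1 q.2.2 ∧ s + q.2.1.card + q.2.2.card = m * t + 2)

lemma step_A (s : ℕ) :
    (Finset.univ.filter (fun A : Finset (TV m t) =>
      A.card = m * t + 2 ∧ none ∉ A ∧
      (A.filter (fun v => ∃ i, v = some (Sum.inl i))).card = s ∧
      ∀ u ∈ A, ∀ w ∈ A, ¬ (treeT m t).Adj u w)).card = (Tset m t s).card := by
  refine card_nbij' (fun A => (decS A, dec0 A, dec1 A)) (fun q => enc q.1 q.2.1 q.2.2)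
    ?_ ?_ ?_ ?_
  · rintro A hA
    rw [mem_coe, mem_filter] at hA
    obtain ⟨-, hcard, hnone, hfil, hindep⟩ := hA
    rw [indep_iff hnone] at hindep
    rw [filter_w_eq, card_image_of_injective _ vw_inj] at hfil
    simp only [Tset, mem_coe, mem_filter, mem_univ, true_and]
    refine ⟨hfil, ?_, ?_, ?_⟩
    · intro p hp hw
      simp only [dec0, mem_filter] at hp
      simp only [decS, mem_filter] at hw
      exact hindep.1 p hp.2 hw.2
    · simp only [disjoint_left, dec0, dec1, mem_filter, mem_univ, true_and]
      intro p h0 h1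
      exact hindep.2 p h0 h1
    · have := card_enc (decS A) (dec0 A) (dec1 A)
      rw [enc_dec hnone] at this
      rw [← hfil, ← this, hcard]
  · rintro q hq
    simp only [Tset, mem_coe, mem_filter, mem_univ, true_and] at hq
    obtain ⟨hS, hB0, hdisj, hsum⟩ := hq
    rw [mem_coe, mem_filter]
    refine ⟨mem_univ _, ?_, none_not_mem_enc _ _ _, ?_, ?_⟩
    · rw [card_enc, hS, hsum]
    · rw [filter_w_eq, card_image_of_injective _ vw_inj, decS_enc, hS]
    · rw [indep_iff (none_not_mem_enc _ _ _)]
      constructor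
      · intro p hx hw
        rw [vx_mem_enc] at hx; rw [vw_mem_enc] at hw
        exact hB0 p hx hw
      · intro p hx hy
        rw [vx_mem_enc] at hx; rw [vy_mem_enc] at hy
        exact (disjoint_left.mp hdisj) hx hy
  · intro A hA
    rw [mem_coe, mem_filter] at hA
    exact enc_dec hA.2.2.1
  · intro q hq
    ext1
    · exact decS_enc _ _ _
    · ext1
      · exact dec0_enc _ _ _
      · exact dec1_enc _ _ _

end Aux16

namespace Aux16
variable {m t : ℕ}

noncomputable def pairsSet (S : Finset (Fin m)) (K : ℕ) :
    Finset (Finset (Fin m × Fin t) × Finset (Fin m × Fin t)) :=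
  univ.filter (fun q => (∀ p ∈ q.1, p.1 ∉ S) ∧ Disjoint q.1 q.2 ∧ q.1.card + q.2.card = K)

lemma step_B (s : ℕ) (hs : s ≤ m * t + 2) :
    (Tset m t s).card =
      ∑ S ∈ powersetCard s (univ : Finset (Fin m)), (pairsSet (t := t) S (m * t + 2 - s)).card := by
  rw [card_eq_sum_card_fiberwise (f := fun q : Triple m t => q.1)
    (t := powersetCard s (univ : Finset (Fin m)))]
  · refine sum_congr rfl fun S hS => ?_
    refine card_nbij' (fun q => q.2) (fun b => (S, b)) ?_ ?_ ?_ ?_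
    · rintro q hq
      simp only [Tset, mem_coe, mem_filter, mem_univ, true_and] at hq
      obtain ⟨⟨h1, h2, h3, h4⟩, rfl⟩ := hq
      simp only [pairsSet, mem_coe, mem_filter, mem_univ, true_and]
      exact ⟨h2, h3, by omega⟩
    · rintro b hb
      simp only [pairsSet, mem_coe, mem_filter, mem_univ, true_and] at hb
      rw [mem_powersetCard_univ] at hS
      simp only [Tset, mem_coe, mem_filter, mem_univ, true_and]
      exact ⟨⟨hS, hb.1, hb.2.1, by omega⟩, trivial⟩
    · rintro q hq
      simp only [mem_coe, mem_filter] at hq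
      have : q.1 = S := hq.2
      rw [← this]
    · intro b _; rfl
  · intro q hq
    simp only [Tset, mem_coe, mem_filter, mem_univ, true_and] at hq
    rw [mem_coe, mem_powersetCard_univ]
    exact hq.1

noncomputable def Cset (S : Finset (Fin m)) : Finset (Fin m × Fin t) :=
  univ.filter (fun p => p.1 ∉ S)
noncomputable def CCset (S : Finset (Fin m)) : Finset (Fin m × Fin t) :=
  univ.filter (fun p => p.1 ∈ S)

noncomputable def DEset (S : Finset (Fin m)) (K : ℕ) :
    Finset (Finset (Fin m × Fin t) × Finset (Fin m × Fin t)) :=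
  ((Cset (t := t) S).powerset ×ˢ (CCset (t := t) S).powerset).filter
    (fun r => r.1.card + r.2.card = K)

lemma step_C (S : Finset (Fin m)) (K : ℕ) :
    (pairsSet (t := t) S K).card = ∑ r ∈ DEset (t := t) S K, 2 ^ r.1.card := by
  have hmap : ∀ q ∈ pairsSet (t := t) S K,
      (q.1 ∪ (q.2 ∩ Cset S), q.2 \ Cset S) ∈ DEset (t := t) S K := by
    rintro q hq
    simp only [pairsSet, mem_filter, mem_univ, true_and] at hq
    obtain ⟨h1, h2, h3⟩ := hq
    have hq1C : q.1 ⊆ Cset S := fun p hp => by simp [Cset, h1 p hp]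
    simp only [DEset, mem_filter, mem_product, mem_powerset]
    refine ⟨⟨union_subset hq1C inter_subset_right, ?_⟩, ?_⟩
    · intro p hp
      simp only [mem_sdiff, Cset, mem_filter, mem_univ, true_and, not_not] at hp
      simp [CCset, hp.2]
    · rw [card_union_of_disjoint (disjoint_of_subset_right inter_subset_left h2),
        ← h3, add_assoc, card_inter_add_card_sdiff]
  rw [card_eq_sum_card_fiberwise hmap]
  refine sum_congr rfl fun r hr => ?_
  simp only [DEset, mem_filter, mem_product, mem_powerset] at hr
  obtain ⟨⟨hDC, hECC⟩, hK⟩ := hr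
  have hE : ∀ p ∈ r.2, p ∉ Cset (t := t) S := by
    intro p hp hpc
    have h1 := hECC hp
    simp only [CCset, mem_filter, mem_univ, true_and] at h1
    simp only [Cset, mem_filter, mem_univ, true_and] at hpc
    exact hpc h1
  have hEdisjC : Disjoint r.2 (Cset (t := t) S) := by
    simp only [disjoint_left]; exact hE
  rw [← Finset.card_powerset]
  refine card_nbij' (fun q => q.1) (fun B0 => (B0, (r.1 \ B0) ∪ r.2)) ?_ ?_ ?_ ?_
  · rintro q hq
    simp only [mem_coe, mem_filter, pairsSet, mem_univ, true_and] at hq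
    obtain ⟨⟨h1, h2, h3⟩, hf⟩ := hq
    rw [mem_coe, mem_powerset]
    have hsub : q.1 ⊆ q.1 ∪ (q.2 ∩ Cset S) := subset_union_left
    rwa [show q.1 ∪ (q.2 ∩ Cset S) = r.1 from congrArg Prod.fst hf] at hsub
  · rintro B0 hB0
    rw [mem_coe, mem_powerset] at hB0
    have hB0C : B0 ⊆ Cset (t := t) S := hB0.trans hDC
    have hdisjBE : Disjoint B0 r.2 := disjoint_of_subset_left hB0C hEdisjC.symm
    have hdisjDE : Disjoint (r.1 \ B0) r.2 :=
      disjoint_of_subset_left ((sdiff_subset).trans hDC) hEdisjC.symm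
    have h1 : ((r.1 \ B0) ∪ r.2) ∩ Cset (t := t) S = r.1 \ B0 := by
      ext p
      simp only [mem_inter, mem_union, mem_sdiff]
      constructor
      · rintro ⟨hpu | hpE, hpC⟩
        · exact hpu
        · exact absurd hpC (hE p hpE)
      · intro h
        exact ⟨Or.inl h, hDC h.1⟩
    have h2 : ((r.1 \ B0) ∪ r.2) \ Cset (t := t) S = r.2 := by
      ext p
      simp only [mem_sdiff, mem_union]
      constructor
      · rintro ⟨hpu | hpE, hpC⟩
        · exact absurd (hDC hpu.1) hpC
        · exact hpE
      · intro h
        exact ⟨Or.inr h, hE p h⟩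
    simp only [mem_coe, mem_filter, pairsSet, mem_univ, true_and]
    refine ⟨⟨?_, ?_, ?_⟩, ?_⟩
    · intro p hp
      have := hB0C hp
      simpa [Cset] using this
    · exact disjoint_union_right.mpr ⟨disjoint_sdiff, hdisjBE⟩
    · have hle := card_le_card hB0
      rw [card_union_of_disjoint hdisjDE, card_sdiff_of_subset hB0]
      omega
    · rw [Prod.ext_iff]
      refine ⟨?_, ?_⟩
      · show B0 ∪ (((r.1 \ B0) ∪ r.2) ∩ Cset S) = r.1
        rw [h1, union_sdiff_of_subset hB0]
      · show ((r.1 \ B0) ∪ r.2) \ Cset S = r.2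
        exact h2
  · rintro q hq
    simp only [mem_coe, mem_filter, pairsSet, mem_univ, true_and] at hq
    obtain ⟨⟨h1, h2, h3⟩, hf⟩ := hq
    have hr1 : r.1 = q.1 ∪ (q.2 ∩ Cset S) := (congrArg Prod.fst hf).symm
    have hr2 : r.2 = q.2 \ Cset S := (congrArg Prod.snd hf).symm
    rw [Prod.ext_iff]
    refine ⟨rfl, ?_⟩
    show (r.1 \ q.1) ∪ r.2 = q.2
    rw [hr1, hr2, union_sdiff_distrib, sdiff_self]
    rw [show (⊥ : Finset (Fin m × Fin t)) ∪ (q.2 ∩ Cset S) \ q.1 = (q.2 ∩ Cset S) \ q.1 from bot_sup_eq _]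
    have hq2C : (q.2 ∩ Cset S) \ q.1 = q.2 ∩ Cset S := by
      rw [Finset.sdiff_eq_self_iff_disjoint]
      exact disjoint_of_subset_left inter_subset_left h2.symm
    rw [hq2C]
    ext p
    simp only [mem_union, mem_inter, mem_sdiff]
    by_cases hpc : p ∈ Cset (t := t) S <;> tauto
  · intro B0 _; rfl

end Aux16

namespace Aux16
variable {m t : ℕ}

lemma card_Cset {S : Finset (Fin m)} {s : ℕ} (hS : S.card = s) :
    (Cset (t := t) S).card = m * t - s * t := by
  have : Cset (t := t) S = Sᶜ ×ˢ (univ : Finset (Fin t)) := by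
    ext p
    simp [Cset, mem_product, mem_compl]
  rw [this, card_product, card_compl, card_univ, Fintype.card_fin, Fintype.card_fin, hS,
    Nat.sub_mul]

lemma card_CCset {S : Finset (Fin m)} {s : ℕ} (hS : S.card = s) :
    (CCset (t := t) S).card = s * t := by
  have : CCset (t := t) S = S ×ˢ (univ : Finset (Fin t)) := by
    ext p
    simp [CCset, mem_product]
  rw [this, card_product, card_univ, Fintype.card_fin, hS]

lemma step_D (S : Finset (Fin m)) (K : ℕ) (hK : (Cset (t := t) S).card < K) :
    ∑ r ∈ DEset (t := t) S K, 2 ^ r.1.card =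
      ∑ d ∈ range ((Cset (t := t) S).card + 1),
        (Cset (t := t) S).card.choose d *
          (((CCset (t := t) S).card.choose (K - d)) * 2 ^ d) := by
  rw [DEset, sum_filter, Finset.sum_product]
  have inner : ∀ D ∈ (Cset (t := t) S).powerset,
      (∑ E ∈ (CCset (t := t) S).powerset,
        if D.card + E.card = K then (2 : ℕ) ^ D.card else 0) =
      ((CCset (t := t) S).card.choose (K - D.card)) * 2 ^ D.card := by
    intro D hD
    rw [mem_powerset] at hD
    have hDlt : D.card < K := lt_of_le_of_lt (card_le_card hD) hK
    rw [← sum_filter, sum_const, smul_eq_mul]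
    congr 1
    rw [← card_powersetCard]
    congr 1
    rw [powersetCard_eq_filter]
    apply filter_congr
    intro E hE
    simp only [mem_powerset] at hE
    constructor <;> intro h <;> omega
  rw [sum_congr rfl inner, sum_powerset_apply_card
    (f := fun d => ((CCset (t := t) S).card.choose (K - d)) * 2 ^ d)]
  refine sum_congr rfl fun d _ => ?_
  rw [smul_eq_mul]

end Aux16


/-- For `3 ≤ s ≤ m` and `t ≥ 1`, the number of independent sets of size `mt+2`
in `T_{m,t,1}` avoiding the root and containing exactly `s` of the `w_i` equals
`Σ_{ℓ=0}^{min(s-2, mt-st)} C(m,s)·C(mt-st,ℓ)·C(st,s-2-ℓ)·2^{mt-st-ℓ}`. -/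
theorem stmt_16 (m t s : ℕ) (hs : 3 ≤ s) (hsm : s ≤ m) (ht : 1 ≤ t) :
    (Finset.univ.filter (fun A : Finset (TV m t) =>
      A.card = m * t + 2 ∧ none ∉ A ∧
      (A.filter (fun v => ∃ i, v = some (Sum.inl i))).card = s ∧
      ∀ u ∈ A, ∀ w ∈ A, ¬ (treeT m t).Adj u w)).card
      = ∑ ℓ ∈ Finset.range (min (s - 2) (m * t - s * t) + 1),
          m.choose s * (m * t - s * t).choose ℓ * (s * t).choose (s - 2 - ℓ) *
            2 ^ (m * t - s * t - ℓ) := by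
  have hsb : s ≤ s * t := Nat.le_mul_of_pos_right s ht
  have hba : s * t ≤ m * t := Nat.mul_le_mul_right t hsm
  have hma : m ≤ m * t := Nat.le_mul_of_pos_right m ht
  set a := m * t with ha
  set b := s * t with hb
  set K := a + 2 - s with hKdef
  set N1 := a - b with hN1
  rw [Aux16.step_A, Aux16.step_B s (by omega)]
  have hSc : ∀ S ∈ powersetCard s (univ : Finset (Fin m)),
      (Aux16.pairsSet (t := t) S (a + 2 - s)).card =
        ∑ d ∈ range (N1 + 1), N1.choose d * (b.choose (K - d) * 2 ^ d) := by
    intro S hS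
    rw [mem_powersetCard_univ] at hS
    rw [Aux16.step_C, Aux16.step_D _ _ (by rw [Aux16.card_Cset hS]; omega),
      Aux16.card_Cset hS, Aux16.card_CCset hS]
  rw [sum_congr rfl hSc, sum_const, card_powersetCard, card_univ, Fintype.card_fin,
    smul_eq_mul]
  rw [← Finset.sum_range_reflect (fun d => N1.choose d * (b.choose (K - d) * 2 ^ d)) (N1 + 1)]
  simp only [Nat.add_sub_cancel]
  rw [show ∑ ℓ ∈ range (N1 + 1), N1.choose (N1 - ℓ) * (b.choose (K - (N1 - ℓ)) * 2 ^ (N1 - ℓ))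
      = ∑ ℓ ∈ range (min (s - 2) N1 + 1),
          N1.choose ℓ * (b.choose (s - 2 - ℓ) * 2 ^ (N1 - ℓ)) from ?_]
  · rw [mul_sum]
    refine sum_congr rfl fun ℓ hℓ => ?_
    ring
  · have hsub : range (min (s - 2) N1 + 1) ⊆ range (N1 + 1) := by
      apply range_subset_range.mpr
      omega
    have hzero : ∀ ℓ ∈ range (N1 + 1), ℓ ∉ range (min (s - 2) N1 + 1) →
        N1.choose (N1 - ℓ) * (b.choose (K - (N1 - ℓ)) * 2 ^ (N1 - ℓ)) = 0 := by
      intro ℓ hℓ hnot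
      rw [mem_range] at hℓ hnot
      have h1 : b < K - (N1 - ℓ) := by omega
      rw [Nat.choose_eq_zero_of_lt h1, zero_mul, mul_zero]
    rw [← sum_subset hsub hzero]
    refine sum_congr rfl fun ℓ hℓ => ?_
    rw [mem_range] at hℓ
    have hℓ1 : ℓ ≤ s - 2 := by omega
    have hℓ2 : ℓ ≤ N1 := by omega
    rw [Nat.choose_symm hℓ2]
    congr 2
    have h1 : K - (N1 - ℓ) = b - (s - 2 - ℓ) := by omega
    rw [h1, Nat.choose_symm (by omega)]
end
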